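/- Let Ω ⊂ ℝⁿ be a convex open set, let u : Ω → ℝ be twice differentiable, and suppose the concavity function C_u attains a local maximum at an interior point (x₁, x₃, λ) ∈ Ω × Ω × (0,1), with x₂ := λx₃ + (1−λ)x₁ ∈ Ω. Let A = (a^{ij}) be any symmetric positive semidefinite n×n real matrix, and set α := (1−λ)² T(x₂) − (1−λ) T(x₁), γ := λ² T(x₂) − λ T(x₃), and β := λ(1−λ) T(x₂), where T(x) := ∑_{i,j=1}^n a^{ij} D²_{ij}u(x). Then for all s, t ∈ ℝ one has α s² + 2β s t + γ t² ≤ 0; in particular α ≤ 0, γ ≤ 0, and β² ≤ αγ. -/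

import Mathlib

/-!
Perturb `x₁` and `x₃` along `s • v` and `t • v` with `λ` fixed; then `x₂` moves along `c • v`,
`c = λ t + (1 - λ) s`. Along this line the concavity function has a local maximum, so its second
derivative is nonpositive: the quadratic form
`c² D²u(x₂) - λ t² D²u(x₃) - (1 - λ) s² D²u(x₁)` is negative semidefinite. Pairing it with the
positive semidefinite matrix `A = Bᵀ B`, i.e. summing it over the rows of `B`, gives
`α s² + 2 β s t + γ t² ≤ 0`; the remaining inequalities are those of a nonpositive binary
quadratic form.
-/

open Set

/-- The second partial derivative `D²_{ij} u (x)`. -/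
noncomputable def secondPartial {n : ℕ} (u : EuclideanSpace ℝ (Fin n) → ℝ)
    (x : EuclideanSpace ℝ (Fin n)) (i j : Fin n) : ℝ :=
  fderiv ℝ (fun y => fderiv ℝ u y (EuclideanSpace.single j 1)) x (EuclideanSpace.single i 1)

open Filter Topology
open scoped Matrix

theorem IsLocalMax.hasDerivAt_deriv_nonpos {f f' : ℝ → ℝ} {a L : ℝ} (h : IsLocalMax f a)
    (hf : ∀ᶠ x in 𝓝 a, HasDerivAt f (f' x) x) (hf' : HasDerivAt f' L a) : L ≤ 0 := by
  by_contra! hL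
  -- the sufficient second-derivative test makes `a` also a local minimum, so `f` is locally
  -- constant and `L = 0`
  have hderiv : deriv f =ᶠ[𝓝 a] f' := hf.mono fun x hx => hx.deriv
  have hmin : IsLocalMin f a := by
    refine isLocalMin_of_deriv_deriv_pos ?_ ?_ hf.self_of_nhds.continuousAt
    · rwa [(hf'.congr_of_eventuallyEq hderiv).deriv]
    · rw [hderiv.eq_of_nhds]
      exact h.hasDerivAt_eq_zero hf.self_of_nhds
  have hconst : ∀ᶠ x in 𝓝 a, f x = f a := (h.and hmin).mono fun x hx => le_antisymm hx.1 hx.2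
  have hzero : f' =ᶠ[𝓝 a] fun _ => 0 := by
    filter_upwards [hconst.eventually_nhds, hf] with x hx hfx
    exact hfx.unique ((hasDerivAt_const x (f a)).congr_of_eventuallyEq hx)
  exact hL.ne' ((hf'.congr_of_eventuallyEq hzero.symm).unique (hasDerivAt_const a 0))

theorem nonpos_and_sq_le_mul_of_forall_quadratic_nonpos {a b c : ℝ}
    (h : ∀ s t : ℝ, a * s ^ 2 + 2 * b * s * t + c * t ^ 2 ≤ 0) :
    a ≤ 0 ∧ c ≤ 0 ∧ b ^ 2 ≤ a * c := by
  refine ⟨by simpa using h 1 0, by simpa using h 0 1, ?_⟩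
  have hd := discrim_le_zero (a := -a) (b := -(2 * b)) (c := -c) fun s => by nlinarith [h s 1]
  rw [discrim] at hd
  nlinarith

theorem Matrix.PosSemidef.sum_mul_apply_nonpos {ι M : Type*} [Fintype ι]
    [NormedAddCommGroup M] [NormedSpace ℝ M] {A : Matrix ι ι ℝ} (hA : A.PosSemidef)
    (H : M →L[ℝ] M →L[ℝ] ℝ) (hH : ∀ v, H v v ≤ 0) (e : ι → M) :
    ∑ i, ∑ j, A i j * H (e i) (e j) ≤ 0 := by
  classical
  obtain ⟨B, rfl⟩ : ∃ B : Matrix ι ι ℝ, A = Bᴴ * B := by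
    open scoped MatrixOrder in
    exact CStarAlgebra.nonneg_iff_eq_star_mul_self.mp hA.nonneg
  have hrow : ∀ k, H (∑ i, B k i • e i) (∑ j, B k j • e j)
      = ∑ i, ∑ j, B k i * B k j * H (e i) (e j) := fun k => by
    simp only [map_sum, map_smul, FunLike.coe_sum, Finset.sum_apply, FunLike.coe_smul,
      Pi.smul_apply, smul_eq_mul, Finset.mul_sum]
    rw [Finset.sum_comm]
    simp only [mul_left_comm, mul_assoc]
  calc ∑ i, ∑ j, (Bᴴ * B) i j * H (e i) (e j)
      = ∑ k, ∑ i, ∑ j, B k i * B k j * H (e i) (e j) := by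
        simp only [Matrix.mul_apply, Matrix.conjTranspose_apply, star_trivial, Finset.sum_mul]
        exact (Finset.sum_congr rfl fun i _ => Finset.sum_comm).trans Finset.sum_comm
    _ ≤ 0 := Finset.sum_nonpos fun k _ => hrow k ▸ hH _

theorem secondPartial_eq_fderiv_fderiv {n : ℕ} {u : EuclideanSpace ℝ (Fin n) → ℝ}
    {x : EuclideanSpace ℝ (Fin n)} (hu : DifferentiableAt ℝ (fderiv ℝ u) x) (i j : Fin n) :
    secondPartial u x i j
      = fderiv ℝ (fderiv ℝ u) x (EuclideanSpace.single i 1) (EuclideanSpace.single j 1) := by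
  simp [secondPartial, fderiv_clm_apply hu (differentiableAt_const _)]

section Line

variable {E F : Type*} [NormedAddCommGroup E] [NormedSpace ℝ E]
  [NormedAddCommGroup F] [NormedSpace ℝ F] {x h : E}

theorem HasFDerivAt.hasDerivAt_comp_add_smul {f : E → F} {f' : E →L[ℝ] F} {τ : ℝ}
    (hf : HasFDerivAt f f' (x + τ • h)) :
    HasDerivAt (fun σ : ℝ => f (x + σ • h)) (f' h) τ := by
  have hline : HasDerivAt (fun σ : ℝ => x + σ • h) h τ := by
    simpa using ((hasDerivAt_id τ).smul_const h).const_add x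
  exact hf.comp_hasDerivAt τ hline

theorem eventually_hasDerivAt_comp_add_smul {u : E → ℝ}
    (hu : ∀ᶠ y in 𝓝 x, DifferentiableAt ℝ u y) :
    ∀ᶠ τ in 𝓝 (0 : ℝ),
      HasDerivAt (fun σ : ℝ => u (x + σ • h)) (fderiv ℝ u (x + τ • h) h) τ := by
  have hline : Tendsto (fun τ : ℝ => x + τ • h) (𝓝 0) (𝓝 x) := by
    have : Continuous (fun τ : ℝ => x + τ • h) := by fun_prop
    simpa using this.tendsto 0
  exact (hline.eventually hu).mono fun τ hτ => hτ.hasFDerivAt.hasDerivAt_comp_add_smul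

theorem hasDerivAt_fderiv_comp_add_smul {u : E → ℝ} (hu : DifferentiableAt ℝ (fderiv ℝ u) x) :
    HasDerivAt (fun σ : ℝ => fderiv ℝ u (x + σ • h) h) (fderiv ℝ (fderiv ℝ u) x h h) 0 :=
  ((ContinuousLinearMap.apply ℝ ℝ h).hasFDerivAt.comp x hu.hasFDerivAt).hasLineDerivAt h

end Line

noncomputable def concavityFunction {E : Type*} [AddCommGroup E] [Module ℝ E] (u : E → ℝ)
    (p : E × E × ℝ) : ℝ :=
  u (p.2.2 • p.2.1 + (1 - p.2.2) • p.1) - p.2.2 * u p.2.1 - (1 - p.2.2) * u p.1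

theorem IsLocalMax.concavityFunction_hessian_nonpos {E : Type*} [NormedAddCommGroup E]
    [NormedSpace ℝ E] {u : E → ℝ} {Ω : Set E} (hΩ : IsOpen Ω) (hu : DifferentiableOn ℝ u Ω)
    (hu2 : DifferentiableOn ℝ (fderiv ℝ u) Ω) {x₁ x₃ : E} {lam : ℝ} (hx₁ : x₁ ∈ Ω)
    (hx₃ : x₃ ∈ Ω) (hx₂ : lam • x₃ + (1 - lam) • x₁ ∈ Ω)
    (hmax : IsLocalMax (concavityFunction u) (x₁, x₃, lam)) (h₁ h₃ : E) :
    fderiv ℝ (fderiv ℝ u) (lam • x₃ + (1 - lam) • x₁) (lam • h₃ + (1 - lam) • h₁)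
        (lam • h₃ + (1 - lam) • h₁)
      - lam * fderiv ℝ (fderiv ℝ u) x₃ h₃ h₃ - (1 - lam) * fderiv ℝ (fderiv ℝ u) x₁ h₁ h₁
      ≤ 0 := by
  set x₂ := lam • x₃ + (1 - lam) • x₁
  set h₂ := lam • h₃ + (1 - lam) • h₁
  have hcurve : ∀ τ : ℝ, concavityFunction u (x₁ + τ • h₁, x₃ + τ • h₃, lam)
      = u (x₂ + τ • h₂) - lam * u (x₃ + τ • h₃) - (1 - lam) * u (x₁ + τ • h₁) := fun τ => by
    simp only [concavityFunction, x₂, h₂]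
    congr 3
    module
  have hloc : IsLocalMax
      (fun τ : ℝ => u (x₂ + τ • h₂) - lam * u (x₃ + τ • h₃) - (1 - lam) * u (x₁ + τ • h₁)) 0 := by
    have hline : Tendsto (fun τ : ℝ => (x₁ + τ • h₁, x₃ + τ • h₃, lam)) (𝓝 0)
        (𝓝 (x₁, x₃, lam)) := by
      have : Continuous (fun τ : ℝ => (x₁ + τ • h₁, x₃ + τ • h₃, lam)) := by fun_prop
      simpa using this.tendsto 0
    filter_upwards [hline.eventually hmax] with τ hτ
    simp only [← hcurve]
    simpa using hτ
  have hd {x} (hx : x ∈ Ω) (h : E) :=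
    eventually_hasDerivAt_comp_add_smul (h := h) (hu.eventually_differentiableAt (hΩ.mem_nhds hx))
  have hd2 {x} (hx : x ∈ Ω) (h : E) :=
    hasDerivAt_fderiv_comp_add_smul (h := h) (hu2.differentiableAt (hΩ.mem_nhds hx))
  have hderiv : ∀ᶠ τ in 𝓝 (0 : ℝ), HasDerivAt
      (fun τ : ℝ => u (x₂ + τ • h₂) - lam * u (x₃ + τ • h₃) - (1 - lam) * u (x₁ + τ • h₁))
      (fderiv ℝ u (x₂ + τ • h₂) h₂ - lam * fderiv ℝ u (x₃ + τ • h₃) h₃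
        - (1 - lam) * fderiv ℝ u (x₁ + τ • h₁) h₁) τ := by
    filter_upwards [hd hx₂ h₂, hd hx₃ h₃, hd hx₁ h₁] with τ d₂ d₃ d₁
    exact (d₂.sub (d₃.const_mul lam)).sub (d₁.const_mul (1 - lam))
  exact hloc.hasDerivAt_deriv_nonpos hderiv
    (((hd2 hx₂ h₂).sub ((hd2 hx₃ h₃).const_mul lam)).sub ((hd2 hx₁ h₁).const_mul (1 - lam)))

theorem stmt2_general {n : ℕ} (Ω : Set (EuclideanSpace ℝ (Fin n)))
    (hΩo : IsOpen Ω)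
    (u : EuclideanSpace ℝ (Fin n) → ℝ)
    (hu : DifferentiableOn ℝ u Ω) (hu2 : DifferentiableOn ℝ (fderiv ℝ u) Ω)
    (x₁ x₃ : EuclideanSpace ℝ (Fin n)) (lam : ℝ)
    (hx₁ : x₁ ∈ Ω) (hx₃ : x₃ ∈ Ω)
    (hx₂ : lam • x₃ + (1 - lam) • x₁ ∈ Ω)
    (hmax : IsLocalMax
      (fun p : EuclideanSpace ℝ (Fin n) × EuclideanSpace ℝ (Fin n) × ℝ =>
        u (p.2.2 • p.2.1 + (1 - p.2.2) • p.1) - p.2.2 * u p.2.1 - (1 - p.2.2) * u p.1)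
      (x₁, x₃, lam))
    (A : Matrix (Fin n) (Fin n) ℝ) (hA : A.PosSemidef)
    (T : EuclideanSpace ℝ (Fin n) → ℝ)
    (hT : ∀ x, T x = ∑ i, ∑ j, A i j * secondPartial u x i j)
    (α β γ : ℝ)
    (hα : α = (1 - lam) ^ 2 * T (lam • x₃ + (1 - lam) • x₁) - (1 - lam) * T x₁)
    (hγ : γ = lam ^ 2 * T (lam • x₃ + (1 - lam) • x₁) - lam * T x₃)
    (hβ : β = lam * (1 - lam) * T (lam • x₃ + (1 - lam) • x₁)) :
    (∀ s t : ℝ, α * s ^ 2 + 2 * β * s * t + γ * t ^ 2 ≤ 0) ∧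
      α ≤ 0 ∧ γ ≤ 0 ∧ β ^ 2 ≤ α * γ := by
  set D2 := fderiv ℝ (fderiv ℝ u)
  set e : Fin n → EuclideanSpace ℝ (Fin n) := fun i => EuclideanSpace.single i 1
  have hT' : ∀ x ∈ Ω, T x = ∑ i, ∑ j, A i j * D2 x (e i) (e j) := fun x hx => by
    simp only [hT, secondPartial_eq_fderiv_fderiv (hu2.differentiableAt (hΩo.mem_nhds hx)), D2, e]
  have hform : ∀ s t : ℝ, α * s ^ 2 + 2 * β * s * t + γ * t ^ 2 ≤ 0 := by
    intro s t
    set c := lam * t + (1 - lam) * s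
    have hH : ∀ v, (c ^ 2 • D2 (lam • x₃ + (1 - lam) • x₁) - (lam * t ^ 2) • D2 x₃
        - ((1 - lam) * s ^ 2) • D2 x₁) v v ≤ 0 := fun v => by
      have := hmax.concavityFunction_hessian_nonpos hΩo hu hu2 hx₁ hx₃ hx₂ (s • v) (t • v)
      rw [show lam • t • v + (1 - lam) • s • v = c • v by module] at this
      simp only [map_smul, FunLike.coe_sub, FunLike.coe_smul, Pi.sub_apply, Pi.smul_apply,
        smul_eq_mul] at this ⊢
      linarith
    have := hA.sum_mul_apply_nonpos _ hH e
    simp only [FunLike.coe_sub, FunLike.coe_smul, Pi.sub_apply, Pi.smul_apply, smul_eq_mul,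
      mul_sub, Finset.sum_sub_distrib, mul_left_comm _ (c ^ 2), mul_left_comm _ (lam * t ^ 2),
      mul_left_comm _ ((1 - lam) * s ^ 2), ← Finset.mul_sum] at this
    rw [hα, hβ, hγ, hT' _ hx₂, hT' _ hx₁, hT' _ hx₃]
    linear_combination this
  exact ⟨hform, nonpos_and_sq_le_mul_of_forall_quadratic_nonpos hform⟩

/-- If the concavity function of a twice differentiable `u` on a convex
open set `Ω` attains a local maximum at an interior point `(x₁,x₃,λ) ∈ Ω × Ω × (0,1)`
(with `x₂ := λx₃+(1−λ)x₁ ∈ Ω`), `A` is any symmetric positive semidefinite matrix,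
and `T(x) := ∑ᵢⱼ aᶦʲ D²ᵢⱼu(x)`, then with
`α := (1−λ)² T(x₂) − (1−λ) T(x₁)`, `γ := λ² T(x₂) − λ T(x₃)`, `β := λ(1−λ) T(x₂)`,
one has `α s² + 2β s t + γ t² ≤ 0` for all `s, t`; in particular `α ≤ 0`, `γ ≤ 0`
and `β² ≤ αγ`. -/
theorem stmt2 {n : ℕ} (Ω : Set (EuclideanSpace ℝ (Fin n)))
    (hΩo : IsOpen Ω) (hΩc : Convex ℝ Ω)
    (u : EuclideanSpace ℝ (Fin n) → ℝ)
    (hu : DifferentiableOn ℝ u Ω) (hu2 : DifferentiableOn ℝ (fderiv ℝ u) Ω)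
    (x₁ x₃ : EuclideanSpace ℝ (Fin n)) (lam : ℝ)
    (hx₁ : x₁ ∈ Ω) (hx₃ : x₃ ∈ Ω) (hlam : lam ∈ Ioo (0 : ℝ) 1)
    (hx₂ : lam • x₃ + (1 - lam) • x₁ ∈ Ω)
    (hmax : IsLocalMax
      (fun p : EuclideanSpace ℝ (Fin n) × EuclideanSpace ℝ (Fin n) × ℝ =>
        u (p.2.2 • p.2.1 + (1 - p.2.2) • p.1) - p.2.2 * u p.2.1 - (1 - p.2.2) * u p.1)
      (x₁, x₃, lam))
    (A : Matrix (Fin n) (Fin n) ℝ) (hA : A.PosSemidef)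
    (T : EuclideanSpace ℝ (Fin n) → ℝ)
    (hT : ∀ x, T x = ∑ i, ∑ j, A i j * secondPartial u x i j)
    (α β γ : ℝ)
    (hα : α = (1 - lam) ^ 2 * T (lam • x₃ + (1 - lam) • x₁) - (1 - lam) * T x₁)
    (hγ : γ = lam ^ 2 * T (lam • x₃ + (1 - lam) • x₁) - lam * T x₃)
    (hβ : β = lam * (1 - lam) * T (lam • x₃ + (1 - lam) • x₁)) :
    (∀ s t : ℝ, α * s ^ 2 + 2 * β * s * t + γ * t ^ 2 ≤ 0) ∧
      α ≤ 0 ∧ γ ≤ 0 ∧ β ^ 2 ≤ α * γ :=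
  stmt2_general Ω hΩo u hu hu2 x₁ x₃ lam hx₁ hx₃ hx₂ hmax A hA T hT α β γ hα hγ hβ
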